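/- In any Lie ring, for all n ≥ 1 and all k with 1 ≤ k ≤ n, the partial identity [Σ_{i=0}^{k} Σ_{j=0}^{⌊i/2⌋} (−1)^{i+1} α_{i−j,j} [[C_{n+i−j}, C_{n+j−1}], C_{n−i}], b] = Σ_{t=0}^{⌊(k+1)/2⌋} (−1)^{k+1} α_{k+1−t,t} [[C_{n+k+1−t}, C_{n−1+t}], C_{n−k}] holds, where Cₙ is the Engel bracket of a by b and α_{i,j} are defined as α_{0,0}=1, α_{i,j} = 2·C(i+j−1,j) + C(i+j−2,j−1) − C(i+j−2,j−2) − 2·C(i+j−1,j−2) otherwise. -/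

import Mathlib

/-- The Engel bracket: `engel a b n = [a,_n b] = Cₙ`. -/
def engel {L : Type*} [LieRing L] (a b : L) : ℕ → L
  | 0 => a
  | n + 1 => ⁅engel a b n, b⁆

/-- Binomial coefficient `C(n,k)` on integers, taken to be `0` when `k < 0` or `k > n`. -/
def ch (n k : ℤ) : ℤ := if k < 0 ∨ n < k then 0 else (n.toNat.choose k.toNat : ℤ)

/-- The coefficients `α_{i,j}`. -/
def alpha (i j : ℕ) : ℤ :=
  if i = 0 ∧ j = 0 then 1
  else 2 * ch ((i : ℤ) + j - 1) j + ch ((i : ℤ) + j - 2) ((j : ℤ) - 1)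
    - ch ((i : ℤ) + j - 2) ((j : ℤ) - 2) - 2 * ch ((i : ℤ) + j - 1) ((j : ℤ) - 2)

/-!
Write `T(p,q,r) = [[C_p, C_q], C_r]`. Since `[·, b]` is a derivation and `[C_p, b] = C_{p+1}`,
bracketing `T(p,q,r)` with `b` gives the sum of the three triples with one index raised. Induct on
`k`: bracketing the new row `i = k + 1` with `b`, the triples whose last index is raised cancel the
previous right-hand side, and the other two families merge into the next right-hand side by the
Pascal-type recurrence `α_{i+1,j+1} = α_{i,j+1} + α_{i+1,j}`. The leftover boundary term vanishes
because either `α_{m,m+1} = 0` or it is `[[C_p, C_p], C_r] = 0`. The base case `k = 1` is the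
Jacobi identity.
-/

lemma ch_natCast (N K : ℕ) : ch N K = N.choose K := by
  unfold ch
  split_ifs with h
  · rcases h with h | h
    · omega
    · rw [Nat.choose_eq_zero_of_lt (by exact_mod_cast h), Nat.cast_zero]
  · simp

lemma ch_of_neg (n : ℤ) {k : ℤ} (hk : k < 0) : ch n k = 0 := by
  simp [ch, hk]

lemma ch_zero_right {n : ℤ} (hn : 0 ≤ n) : ch n 0 = 1 := by
  simp [ch, hn.not_gt]

lemma ch_succ {n : ℤ} (hn : 0 ≤ n) (k : ℤ) : ch (n + 1) k = ch n k + ch n (k - 1) := by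
  lift n to ℕ using hn
  rcases lt_trichotomy k 0 with hk | rfl | hk
  · rw [ch_of_neg _ hk, ch_of_neg _ hk, ch_of_neg _ (by omega), add_zero]
  · rw [ch_zero_right (by omega), ch_zero_right (by omega), ch_of_neg _ (by omega), add_zero]
  · lift k to ℕ using hk.le
    obtain ⟨k, rfl⟩ : ∃ k', k = k' + 1 := ⟨k - 1, by omega⟩
    push_cast
    rw [add_sub_cancel_right, ← Nat.cast_succ, ← Nat.cast_succ, ch_natCast, ch_natCast, ch_natCast,
      Nat.choose_succ_succ', Nat.cast_add, add_comm]

lemma ch_symm {n k : ℤ} (hk : 0 ≤ k) (hkn : k ≤ n) : ch n k = ch n (n - k) := by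
  lift k to ℕ using hk
  lift n to ℕ using (by omega)
  rw [← Nat.cast_sub (by omega), ch_natCast, ch_natCast, Nat.choose_symm (by omega)]

lemma alpha_succ_zero (i : ℕ) : alpha (i + 1) 0 = 2 := by
  simp [alpha, ch_of_neg, ch_zero_right]

lemma alpha_succ_succ {i j : ℕ} (hij : 1 ≤ i + j) :
    alpha (i + 1) (j + 1) = alpha i (j + 1) + alpha (i + 1) j := by
  have h0 : (0 : ℤ) ≤ i + j - 1 := by omega
  have p1 := ch_succ (n := i + j) (by omega) (j + 1)
  have p2 := ch_succ h0 j
  have p3 := ch_succ h0 (j - 1)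
  have p4 := ch_succ (n := i + j) (by omega) (j - 1)
  unfold alpha
  rw [if_neg (by omega), if_neg (by omega), if_neg (by omega)]
  push_cast
  ring_nf at p1 p2 p3 p4 ⊢
  linarith

lemma alpha_self_succ (m : ℕ) : alpha m (m + 1) = 0 := by
  rcases Nat.eq_zero_or_pos m with rfl | hm
  · norm_num [alpha, ch]
  have s1 := ch_symm (n := 2 * m) (k := m + 1) (by omega) (by omega)
  have s2 := ch_symm (n := 2 * m - 1) (k := m) (by omega) (by omega)
  unfold alpha
  rw [if_neg (by omega)]
  push_cast
  ring_nf at s1 s2 ⊢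
  linarith

open Finset

lemma sum_range_smul_add_succ {R V : Type*} [Semiring R] [AddCommMonoid V] [Module R V]
    (β γ : ℕ → R) (U : ℕ → V) (M : ℕ) (h₀ : γ 0 = β 0)
    (hsucc : ∀ t < M, γ (t + 1) = β (t + 1) + β t) :
    ∑ t ∈ range (M + 1), β t • (U t + U (t + 1)) =
      ∑ t ∈ range (M + 1), γ t • U t + β M • U (M + 1) := by
  induction M with
  | zero => simp [h₀]
  | succ M ih =>
    rw [sum_range_succ, ih fun t ht ↦ hsucc t (by omega), sum_range_succ _ (M + 1),
      hsucc M M.lt_succ_self, smul_add, add_smul]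
    abel

section Engel

variable {L : Type*} [LieRing L]

lemma lie_lie_eq_lie_lie_add_lie_lie (x y z : L) : ⁅⁅x, y⁆, z⁆ = ⁅⁅x, z⁆, y⁆ + ⁅x, ⁅y, z⁆⁆ := by
  rw [lie_lie, ← lie_skew y ⁅x, z⁆]
  abel

lemma lie_lie_sub_lie_lie (x y z : L) : ⁅⁅x, y⁆, z⁆ - ⁅⁅z, y⁆, x⁆ = ⁅⁅x, z⁆, y⁆ := by
  rw [lie_lie_eq_lie_lie_add_lie_lie x y z, ← lie_skew ⁅z, y⁆ x, ← lie_skew z y, lie_neg]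
  abel

variable (a b : L)

def engelTriple (p q r : ℕ) : L := ⁅⁅engel a b p, engel a b q⁆, engel a b r⁆

lemma lie_engelTriple (p q r : ℕ) :
    ⁅engelTriple a b p q r, b⁆ = engelTriple a b (p + 1) q r + engelTriple a b p (q + 1) r +
      engelTriple a b p q (r + 1) := by
  simp only [engelTriple, engel]
  rw [lie_lie_eq_lie_lie_add_lie_lie, lie_lie_eq_lie_lie_add_lie_lie (engel a b p), add_lie]

lemma engelTriple_self_left (p r : ℕ) : engelTriple a b p p r = 0 := by
  simp [engelTriple]

lemma engelTriple_sub_engelTriple (p q r : ℕ) :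
    engelTriple a b p q r - engelTriple a b r q p = engelTriple a b p r q :=
  lie_lie_sub_lie_lie _ _ _

end Engel

section Rows

variable {L : Type*} [LieRing L] (a b : L) (n : ℕ)

/-- `leftRow n i` is the inner sum of the `i`-th term on the left of `partial_identity` and
`rightRow n k` its right-hand side, both without the sign. -/
def leftRow (i : ℕ) : L :=
  ∑ j ∈ range (i / 2 + 1), alpha (i - j) j • engelTriple a b (n + i - j) (n + j - 1) (n - i)

def rightRow (k : ℕ) : L :=
  ∑ t ∈ range ((k + 1) / 2 + 1),
    alpha (k + 1 - t) t • engelTriple a b (n + k + 1 - t) (n - 1 + t) (n - k)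

lemma lie_leftRow_one_sub_leftRow_zero (hn : 1 ≤ n) :
    ⁅leftRow a b n 1 - leftRow a b n 0, b⁆ = rightRow a b n 1 := by
  obtain ⟨m, rfl⟩ : ∃ m, n = m + 1 := ⟨n - 1, by omega⟩
  have hα₀₀ : alpha 0 0 = 1 := rfl
  have hα₁₁ : alpha 1 1 = 3 := by norm_num [alpha, ch]
  have hJ := engelTriple_sub_engelTriple a b (m + 1 + 1) m (m + 1)
  simp only [leftRow, rightRow, sum_range_succ]
  norm_num [alpha_succ_zero, hα₀₀, hα₁₁, lie_engelTriple, engelTriple_self_left]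
  linear_combination (norm := module) hJ

lemma lie_leftRow_succ {k : ℕ} (hk : 1 ≤ k) (hkn : k + 1 ≤ n) :
    ⁅leftRow a b n (k + 1), b⁆ = rightRow a b n (k + 1) + rightRow a b n k := by
  set M := (k + 1) / 2
  set β : ℕ → ℤ := fun t ↦ alpha (k + 1 - t) t
  set γ : ℕ → ℤ := fun t ↦ alpha (k + 1 + 1 - t) t
  set U : ℕ → L := fun t ↦ engelTriple a b (n + (k + 1) + 1 - t) (n - 1 + t) (n - (k + 1))
  have hexpand : ⁅leftRow a b n (k + 1), b⁆ =
      ∑ t ∈ range (M + 1), β t • (U t + U (t + 1)) + rightRow a b n k := by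
    rw [leftRow, sum_lie, rightRow, ← sum_add_distrib]
    refine sum_congr rfl fun j hj ↦ ?_
    rw [mem_range] at hj
    rw [smul_lie, lie_engelTriple, smul_add]
    simp only [U]
    congr 4 <;> omega
  have hpascal := sum_range_smul_add_succ β γ U M (by simp [β, γ, alpha_succ_zero])
    fun t ht ↦ by
      simp only [β, γ]
      rw [show k + 1 + 1 - (t + 1) = k - t + 1 by omega, show k + 1 - (t + 1) = k - t by omega,
        show k + 1 - t = k - t + 1 by omega, alpha_succ_succ (by omega)]
  have hboundary : ∑ t ∈ range (M + 1), γ t • U t + β M • U (M + 1) = rightRow a b n (k + 1) := by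
    change _ = ∑ t ∈ range ((k + 1 + 1) / 2 + 1), γ t • U t
    rcases Nat.even_or_odd' k with ⟨m, rfl | rfl⟩
    · have hβγ : β m = γ (m + 1) := by
        simp only [β, γ]
        rw [show 2 * m + 1 - m = m + 1 by omega, show 2 * m + 1 + 1 - (m + 1) = m + 1 by omega,
          alpha_succ_succ (by omega), alpha_self_succ, zero_add]
      rw [show M = m by omega, show (2 * m + 1 + 1) / 2 = m + 1 by omega, sum_range_succ _ (m + 1),
        hβγ]
    · have hU : U (M + 1) = 0 := by
        simp only [U]
        rw [show n + (2 * m + 1 + 1) + 1 - (M + 1) = n + m + 1 by omega,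
          show n - 1 + (M + 1) = n + m + 1 by omega, engelTriple_self_left]
      rw [hU, smul_zero, add_zero, show (2 * m + 1 + 1 + 1) / 2 = M by omega]
  rw [hexpand, hpascal, hboundary]

lemma lie_sum_leftRow {k : ℕ} (hk : 1 ≤ k) (hkn : k ≤ n) :
    ⁅∑ i ∈ range (k + 1), (-1 : ℤ) ^ (i + 1) • leftRow a b n i, b⁆ =
      (-1 : ℤ) ^ (k + 1) • rightRow a b n k := by
  induction k, hk using Nat.le_induction with
  | base =>
    rw [← lie_leftRow_one_sub_leftRow_zero a b n hkn]
    simp [sum_range_succ, sub_eq_neg_add]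
  | succ k hk ih =>
    rw [sum_range_succ, add_lie, ih (by omega), smul_lie, lie_leftRow_succ a b n hk hkn]
    module

end Rows

theorem partial_identity {L : Type*} [LieRing L] (a b : L) (n k : ℕ)
    (hk1 : 1 ≤ k) (hk2 : k ≤ n) :
    ⁅∑ i ∈ Finset.range (k + 1), ∑ j ∈ Finset.range (i / 2 + 1),
        ((-1 : ℤ) ^ (i + 1) * alpha (i - j) j) •
          ⁅⁅engel a b (n + i - j), engel a b (n + j - 1)⁆, engel a b (n - i)⁆, b⁆ =
    ∑ t ∈ Finset.range ((k + 1) / 2 + 1),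
        ((-1 : ℤ) ^ (k + 1) * alpha (k + 1 - t) t) •
          ⁅⁅engel a b (n + k + 1 - t), engel a b (n - 1 + t)⁆, engel a b (n - k)⁆ := by
  simp only [mul_smul, ← smul_sum]
  exact lie_sum_leftRow a b n hk1 hk2
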